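/- Define binary strings recursively by x^(1) = (0,0,1,0), y^(1) = (0,1,0,0), and for k ≥ 2, x^(k) = (0, x^(k−1), 0, 0, y^(k−1), 0) and y^(k) = (0, y^(k−1), 0, 0, x^(k−1), 0). Then for every k ≥ 1: x^(k) and y^(k) are distinct strings of length 4(2^k − 1), and they satisfy B^(k)(x^(k)) = B^(k)(y^(k)), B_L^(k)(x^(k)) = B_L^(k)(y^(k)), B_R^(k)(x^(k)) = B_R^(k)(y^(k)), and B_LR^(k)(x^(k)) = B_LR^(k)(y^(k)). In particular, G*(k) ≤ 4(2^k − 1), where G*(k) is the smallest positive integer n such that there exist two distinct binary strings of length n satisfying all four of these equalities. -/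

import Mathlib

/-- The multiset of all `s`-gapped subsequences of a binary string (all lengths,
including the empty subsequence), counted with multiplicity over index choices:
consecutive chosen indices must differ by at least `s`. -/
def gappedSubseqs (s : ℕ) : List Bool → Multiset (List Bool)
  | [] => {[]}
  | a :: l => gappedSubseqs s l + (gappedSubseqs s (l.drop (s - 1))).map (a :: ·)
termination_by x => x.length
decreasing_by
  · simp
  · simp only [List.length_drop, List.length_cons]; omega

/-- The `s`-gapped `k`-deck: all `s`-gapped subsequences of length between 1 and `k`. -/
def gDeck (s k : ℕ) (x : List Bool) : Multiset (List Bool) :=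
  (gappedSubseqs s x).filter (fun w => 1 ≤ w.length ∧ w.length ≤ k)

/-- The exact `s`-gapped `k`-deck: all `s`-gapped subsequences of length exactly `k`. -/
def dDeck (s k : ℕ) (x : List Bool) : Multiset (List Bool) :=
  (gappedSubseqs s x).filter (fun w => w.length = k)

/-- The classical (ungapped) `k`-deck: the multiset of all length-`k` subsequences. -/
def deck (k : ℕ) (x : List Bool) : Multiset (List Bool) :=
  (gappedSubseqs 1 x).filter (fun w => w.length = k)

/-- The gapped `k`-deck `B^(k)` (gap `2`). -/
def Bdeck (k : ℕ) (x : List Bool) : Multiset (List Bool) := gDeck 2 k x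

/-- `B_L^(k)`: the gapped `k`-deck of the string punctured on the left. -/
def BLdeck (k : ℕ) (x : List Bool) : Multiset (List Bool) := Bdeck k x.tail

/-- `B_R^(k)`: the gapped `k`-deck of the string punctured on the right. -/
def BRdeck (k : ℕ) (x : List Bool) : Multiset (List Bool) := Bdeck k x.dropLast

/-- `B_LR^(k)`: the gapped `k`-deck of the string punctured on both ends. -/
def BLRdeck (k : ℕ) (x : List Bool) : Multiset (List Bool) := Bdeck k x.tail.dropLast

/-- `S(k)`: the smallest positive `n` such that two distinct binary strings of
length `n` share the same `k`-deck. -/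
noncomputable def Sval (k : ℕ) : ℕ :=
  sInf {n | 0 < n ∧ ∃ x y : List Bool, x.length = n ∧ y.length = n ∧ x ≠ y ∧
    deck k x = deck k y}

/-- `G(k)`: the smallest positive `n` such that two distinct binary strings of
length `n` share the same gapped `k`-deck. -/
noncomputable def Gval (k : ℕ) : ℕ :=
  sInf {n | 0 < n ∧ ∃ x y : List Bool, x.length = n ∧ y.length = n ∧ x ≠ y ∧
    Bdeck k x = Bdeck k y}

/-- `G_s(k)`: the smallest positive `n` such that two distinct binary strings of
length `n` share the same `s`-gapped `k`-deck. -/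
noncomputable def Gs (s k : ℕ) : ℕ :=
  sInf {n | 0 < n ∧ ∃ x y : List Bool, x.length = n ∧ y.length = n ∧ x ≠ y ∧
    gDeck s k x = gDeck s k y}

/-- `G*(k)`: the smallest positive `n` such that two distinct binary strings of
length `n` share the same gapped `k`-deck, also after puncturing on the left,
right and both sides. -/
noncomputable def Gstar (k : ℕ) : ℕ :=
  sInf {n | 0 < n ∧ ∃ x y : List Bool, x.length = n ∧ y.length = n ∧ x ≠ y ∧
    Bdeck k x = Bdeck k y ∧ BLdeck k x = BLdeck k y ∧
    BRdeck k x = BRdeck k y ∧ BLRdeck k x = BLRdeck k y}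

mutual
/-- Morse-Thue string `x^(k+1)` (index shifted: `mtX 0 = x^(1) = (0,1)`). -/
def mtX : ℕ → List Bool
  | 0 => [false, true]
  | k + 1 => mtX k ++ mtY k
/-- Morse-Thue string `y^(k+1)` (index shifted: `mtY 0 = y^(1) = (1,0)`). -/
def mtY : ℕ → List Bool
  | 0 => [true, false]
  | k + 1 => mtY k ++ mtX k
end

mutual
/-- Padded Morse-Thue string `x^(k+1)` (index shifted: `px 0 = x^(1) = (0,0,1,0)`). -/
def px : ℕ → List Bool
  | 0 => [false, false, true, false]
  | k + 1 => [false] ++ px k ++ [false, false] ++ py k ++ [false]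
/-- Padded Morse-Thue string `y^(k+1)` (index shifted: `py 0 = y^(1) = (0,1,0,0)`). -/
def py : ℕ → List Bool
  | 0 => [false, true, false, false]
  | k + 1 => [false] ++ py k ++ [false, false] ++ px k ++ [false]
end

/-- Interleaving `(z₁,x₁,z₂,x₂,…,z_{k-1},x_{k-1},z_k)` of `z` and `x`
(used with `|z| = |x| + 1`). -/
def interleave : List Bool → List Bool → List Bool
  | z, [] => z
  | [], _ :: _ => []
  | a :: l, b :: m => a :: b :: interleave l m

/-- `N(w, p)`: the number of occurrences of the wildcard string `w`
(entries `none` are wildcards `J`, `some b` is a letter of `Γ = {X, Y}`)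
as a subsequence of `p`, each wildcard matching either letter. -/
def Nw : List (Option Bool) → List Bool → ℕ
  | [], _ => 1
  | _ :: _, [] => 0
  | a :: w, b :: p =>
      Nw (a :: w) p + if a = none ∨ a = some b then Nw w p else 0

/-- `U_r(k)`: wildcard strings of length between `r` and `k` with exactly `r`
non-wildcard symbols. -/
def Ur (r k : ℕ) : Set (List (Option Bool)) :=
  {w | r ≤ w.length ∧ w.length ≤ k ∧ w.countP (fun a => a.isSome) = r}

/-- `U(k₁, k₂) = U₁(k₁) ∪ U₂(k₂)`. -/
def Uset (k1 k2 : ℕ) : Set (List (Option Bool)) := Ur 1 k1 ∪ Ur 2 k2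

/-- `p ∼^{U(k₁,k₂)} q`: `N(w,p) = N(w,q)` for all `w ∈ U(k₁,k₂)`. -/
def equivU (k1 k2 : ℕ) (p q : List Bool) : Prop :=
  ∀ w ∈ Uset k1 k2, Nw w p = Nw w q

/-- `S_U(k₁,k₂)`: the smallest `m` for which two distinct strings
`p, q ∈ Γ^m` satisfy `p ∼^{U(k₁,k₂)} q`. -/
noncomputable def SU (k1 k2 : ℕ) : ℕ :=
  sInf {m | ∃ p q : List Bool, p.length = m ∧ q.length = m ∧ p ≠ q ∧
    equivU k1 k2 p q}

/-- `h_{x,y}(p)`: replace each letter of `p` (`false = X`, `true = Y`) by `x`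
resp. `y` padded with one `0` at each end. -/
def hxy (x y : List Bool) (p : List Bool) : List Bool :=
  (p.map (fun b => [false] ++ (if b then y else x) ++ [false])).flatten

/-! ### Auxiliary development for `stmt4` -/

namespace Stmt4Aux

/-- Count of 2-gapped occurrences of `w` in `x`. -/
def c : List Bool → List Bool → ℕ
  | w, [] => if w = [] then 1 else 0
  | w, [b] => if w = [] then 1 else if w = [b] then 1 else 0
  | w, b :: b' :: x =>
      c w (b' :: x) + (match w with
        | [] => 0
        | a :: w' => if a = b then c w' x else 0)

/-- Count of 2-gapped occurrences of `w` in `x` ending exactly at the last position. -/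
def e : List Bool → List Bool → ℕ
  | _, [] => 0
  | w, [b] => if w = [b] then 1 else 0
  | w, b :: b' :: x =>
      e w (b' :: x) + (match w with
        | [] => 0
        | a :: w' => if a = b then e w' x else 0)

/-- Left shift of a function on words by a letter. -/
def shL (b : Bool) (f : List Bool → ℕ) : List Bool → ℕ
  | [] => 0
  | a :: w => if a = b then f w else 0

/-- Right shift of a function on words by a letter. -/
def shR (b : Bool) (f : List Bool → ℕ) (w : List Bool) : ℕ :=
  if w.getLast? = some b then f w.dropLast else 0

/-- All two-sided splits of a word. -/
def splits : List Bool → List (List Bool × List Bool)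
  | [] => [([], [])]
  | a :: w => ([], a :: w) :: (splits w).map (fun p => (a :: p.1, p.2))

/-- Split-convolution of two functions on words. -/
def S (f g : List Bool → ℕ) (w : List Bool) : ℕ :=
  ((splits w).map (fun p => f p.1 * g p.2)).sum

lemma c_nil_left : ∀ x, c [] x = 1
  | [] => by simp [c]
  | [_] => by simp [c]
  | _ :: b' :: x => by simp [c, c_nil_left (b' :: x)]

lemma e_nil_left : ∀ x, e [] x = 0
  | [] => by simp [e]
  | [_] => by simp [e]
  | _ :: b' :: x => by simp [e, e_nil_left (b' :: x)]

lemma c_cons (w : List Bool) (b : Bool) (x : List Bool) :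
    c w (b :: x) = c w x + shL b (fun w' => c w' (x.drop 1)) w := by
  match x, w with
  | [], [] => simp [c, shL]
  | [], a :: w' =>
    simp only [c, shL, List.drop_nil]
    rcases w' with _ | _ <;> by_cases h : a = b <;> simp [h, c]
  | b' :: x, [] => simp [c, shL]
  | b' :: x, a :: w' => simp [c, shL]

lemma e_cons (w : List Bool) (b : Bool) {x : List Bool} (hx : x ≠ []) :
    e w (b :: x) = e w x + shL b (fun w' => e w' (x.drop 1)) w := by
  match x, w with
  | b' :: x, [] => simp [e, shL]
  | b' :: x, a :: w' => simp [e, shL]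

lemma dropLast_drop_one : ∀ l : List Bool, (l.drop 1).dropLast = l.dropLast.drop 1
  | [] => rfl
  | [_] => rfl
  | a :: b :: l => by simp [List.dropLast_cons₂]

lemma e_add_d : ∀ (x : List Bool) (w : List Bool), e w x + c w x.dropLast = c w x
  | [], w => by simp [e, c]
  | [b], w => by rcases w with _ | ⟨a, w'⟩ <;> simp [e, c]
  | b :: b' :: x, w => by
    rcases w with _ | ⟨a, w'⟩
    · simp [e_nil_left, c_nil_left]
    · have h1 := e_add_d (b' :: x) (a :: w')
      have h2 := e_add_d x w'
      have hd : (b :: b' :: x).dropLast = b :: (b' :: x).dropLast := List.dropLast_cons₂ ..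
      rw [hd]
      rw [c_cons (a :: w') b ((b' :: x).dropLast)]
      have hdd : ((b' :: x).dropLast).drop 1 = x.dropLast := by
        rw [← dropLast_drop_one]; rfl
      show (e (a :: w') (b' :: x) + if a = b then e w' x else 0) +
          (c (a :: w') ((b' :: x).dropLast) + shL b (fun w'' => c w'' (((b' :: x).dropLast).drop 1)) (a :: w')) =
          c (a :: w') (b' :: x) + if a = b then c w' x else 0
      rw [hdd]
      simp only [shL]
      by_cases h : a = b
      · subst h; simp only [eq_self_iff_true, if_true]; omega
      · simp only [if_neg h]; omega

lemma splits_mem : ∀ {w : List Bool} {p : List Bool × List Bool}, p ∈ splits w → p.1 ++ p.2 = w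
  | [], p, hp => by simp [splits] at hp; simp [hp]
  | a :: w, p, hp => by
    simp only [splits, List.mem_cons, List.mem_map] at hp
    rcases hp with rfl | ⟨q, hq, rfl⟩
    · rfl
    · have := splits_mem hq
      simp [← this]

lemma S_nil (f g : List Bool → ℕ) : S f g [] = f [] * g [] := by simp [S, splits]

lemma S_cons (f g : List Bool → ℕ) (a : Bool) (w : List Bool) :
    S f g (a :: w) = f [] * g (a :: w) + S (fun w1 => f (a :: w1)) g w := by
  simp only [S, splits, List.map_map, List.map_cons, List.sum_cons, Function.comp]
  rfl

lemma S_congr {f g f' g' : List Bool → ℕ} {w : List Bool}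
    (h : ∀ p ∈ splits w, f p.1 * g p.2 = f' p.1 * g' p.2) : S f g w = S f' g' w := by
  unfold S
  rw [List.map_congr_left h]

lemma S_zero_left (g : List Bool → ℕ) (w : List Bool) : S (fun _ => 0) g w = 0 := by
  simp [S]

lemma sum_map_add {α : Type*} (l : List α) (A B : α → ℕ) :
    (l.map (fun p => A p + B p)).sum = (l.map A).sum + (l.map B).sum := by
  induction l with
  | nil => simp
  | cons a l ih => simp [ih]; omega

lemma S_add_left (f f' g : List Bool → ℕ) (w : List Bool) :
    S (fun w1 => f w1 + f' w1) g w = S f g w + S f' g w := by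
  simp only [S, add_mul]
  exact sum_map_add _ _ _

lemma S_add_right (f g g' : List Bool → ℕ) (w : List Bool) :
    S f (fun w2 => g w2 + g' w2) w = S f g w + S f g' w := by
  simp only [S, mul_add]
  exact sum_map_add _ _ _

lemma S_unitL (g : List Bool → ℕ) : ∀ w, S (fun w1 => if w1 = [] then 1 else 0) g w = g w
  | [] => by simp [S_nil]
  | a :: w => by
    rw [S_cons]
    have h0 : S (fun w1 => if a :: w1 = ([] : List Bool) then 1 else 0) g w = 0 := by
      rw [show (fun w1 => if a :: w1 = ([] : List Bool) then 1 else 0) = fun _ => (0 : ℕ) from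
        funext fun w1 => by simp]
      exact S_zero_left g w
    rw [h0]
    simp

lemma S_unitR (f : List Bool → ℕ) : ∀ w, S f (fun w2 => if w2 = [] then 1 else 0) w = f w
  | [] => by simp [S_nil]
  | a :: w => by
    rw [S_cons, S_unitR (fun w1 => f (a :: w1)) w]
    simp

lemma S_shL_left (b : Bool) (f g : List Bool → ℕ) (w : List Bool) :
    S (fun w1 => shL b f w1) g w = shL b (fun w' => S f g w') w := by
  rcases w with _ | ⟨a, w'⟩
  · simp [S_nil, shL]
  · rw [S_cons]
    simp only [shL]
    by_cases h : a = b
    · simp [h]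
    · simp only [if_neg h, zero_mul, zero_add]
      exact S_zero_left g w'

lemma S_unitR_single (b : Bool) : ∀ (w : List Bool) (f : List Bool → ℕ),
    S f (fun w2 => if w2 = [b] then 1 else 0) w = shR b f w
  | [], f => by simp [S_nil, shR]
  | a :: w', f => by
    rw [S_cons, S_unitR_single b w' (fun w1 => f (a :: w1))]
    rcases w' with _ | ⟨b', w''⟩
    · simp only [shR]
      by_cases h : a = b <;> simp [h]
    · have h1 : (a :: b' :: w'').getLast? = (b' :: w'').getLast? := List.getLast?_cons_cons ..
      have h2 : (a :: b' :: w'').dropLast = a :: (b' :: w'').dropLast := List.dropLast_cons₂ ..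
      simp only [shR, h1, h2]
      simp

lemma shL_add (b : Bool) (f g : List Bool → ℕ) (w : List Bool) :
    shL b (fun x => f x + g x) w = shL b f w + shL b g w := by
  rcases w with _ | ⟨a, w'⟩
  · rfl
  · simp only [shL]
    by_cases h : a = b <;> simp [h]

lemma c_apply_nil (w : List Bool) : c w [] = if w = [] then 1 else 0 := by
  rcases w with _ | _ <;> simp [c]

lemma c_singleton (w : List Bool) (b : Bool) :
    c w [b] = (if w = [] then 1 else 0) + (if w = [b] then 1 else 0) := by
  rcases w with _ | ⟨a, w'⟩
  · simp [c]
  · simp [c]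

lemma e_singleton (w : List Bool) (b : Bool) : e w [b] = if w = [b] then 1 else 0 := by
  simp [e]

/-- The key concatenation identity for gapped occurrence counts. -/
theorem star2 : ∀ (u v w : List Bool),
    c w (u ++ v) = S (fun w1 => c w1 u.dropLast) (fun w2 => c w2 v) w +
      S (fun w1 => e w1 u) (fun w2 => c w2 (v.drop 1)) w
  | [], v, w => by
    have h1 : S (fun w1 => c w1 ([] : List Bool).dropLast) (fun w2 => c w2 v) w = c w v := by
      rw [S_congr (f' := fun w1 => if w1 = [] then 1 else 0) (g' := fun w2 => c w2 v)
        (fun p _ => by simp [c_apply_nil])]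
      exact S_unitL _ w
    have h2 : S (fun w1 => e w1 ([] : List Bool)) (fun w2 => c w2 (v.drop 1)) w = 0 := by
      rw [S_congr (f' := fun _ => 0) (g' := fun w2 => c w2 (v.drop 1))
        (fun p _ => by simp [e])]
      exact S_zero_left _ w
    rw [h1, h2, List.nil_append, add_zero]
  | [b], v, w => by
    have h1 : S (fun w1 => c w1 ([b] : List Bool).dropLast) (fun w2 => c w2 v) w = c w v := by
      rw [S_congr (f' := fun w1 => if w1 = [] then 1 else 0) (g' := fun w2 => c w2 v)
        (fun p _ => by rw [show ([b] : List Bool).dropLast = [] from rfl, c_apply_nil])]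
      exact S_unitL _ w
    have h2 : S (fun w1 => e w1 [b]) (fun w2 => c w2 (v.drop 1)) w =
        shL b (fun w' => c w' (v.drop 1)) w := by
      rw [S_congr (f' := fun w1 => if w1 = [b] then 1 else 0) (g' := fun w2 => c w2 (v.drop 1))
        (fun p _ => by rw [e_singleton])]
      rcases w with _ | ⟨a, w'⟩
      · simp [S_nil, shL]
      · rw [S_cons]
        simp only [shL]
        by_cases h : a = b
        · subst h
          have h0 : (fun w1 => if a :: w1 = ([a] : List Bool) then 1 else 0) =
              (fun w1 => if w1 = ([] : List Bool) then 1 else 0) := by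
            funext w1; simp
          rw [h0, S_unitL]
          simp
        · have h0 : (fun w1 => if a :: w1 = ([b] : List Bool) then 1 else 0) =
              (fun _ => (0 : ℕ)) := by
            funext w1; simp [h]
          rw [h0, S_zero_left]
          simp [h]
    rw [h1, h2, List.singleton_append, c_cons]
  | b :: b' :: u'', v, w => by
    have hIH1 := star2 (b' :: u'') v
    have hIH2 := star2 u'' v
    have hL : c w ((b :: b' :: u'') ++ v) = c w ((b' :: u'') ++ v) +
        shL b (fun w' => c w' (u'' ++ v)) w := by
      rw [show (b :: b' :: u'') ++ v = b :: ((b' :: u'') ++ v) from rfl, c_cons]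
      rfl
    have hdl : (b :: b' :: u'').dropLast = b :: (b' :: u'').dropLast := List.dropLast_cons₂ ..
    have hdd : ((b' :: u'').dropLast).drop 1 = u''.dropLast := by
      rw [← dropLast_drop_one]; rfl
    have hR1 : S (fun w1 => c w1 ((b :: b' :: u'').dropLast)) (fun w2 => c w2 v) w =
        S (fun w1 => c w1 ((b' :: u'').dropLast)) (fun w2 => c w2 v) w +
        shL b (fun w' => S (fun w1 => c w1 u''.dropLast) (fun w2 => c w2 v) w') w := by
      rw [S_congr (f' := fun w1 => c w1 ((b' :: u'').dropLast) +
            shL b (fun w'' => c w'' u''.dropLast) w1) (g' := fun w2 => c w2 v)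
          (fun p _ => by rw [hdl, c_cons, hdd])]
      rw [S_add_left, S_shL_left]
    have hR2 : S (fun w1 => e w1 (b :: b' :: u'')) (fun w2 => c w2 (v.drop 1)) w =
        S (fun w1 => e w1 (b' :: u'')) (fun w2 => c w2 (v.drop 1)) w +
        shL b (fun w' => S (fun w1 => e w1 u'') (fun w2 => c w2 (v.drop 1)) w') w := by
      rw [S_congr (f' := fun w1 => e w1 (b' :: u'') + shL b (fun w'' => e w'' u'') w1)
          (g' := fun w2 => c w2 (v.drop 1))
          (fun p _ => by rw [e_cons _ _ (by simp : (b' :: u'' : List Bool) ≠ [])]; rfl)]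
      rw [S_add_left, S_shL_left]
    rw [hL, hR1, hR2, hIH1 w]
    have hfun : (fun w' => c w' (u'' ++ v)) = fun w' =>
        S (fun w1 => c w1 u''.dropLast) (fun w2 => c w2 v) w' +
          S (fun w1 => e w1 u'') (fun w2 => c w2 (v.drop 1)) w' := funext fun w' => hIH2 w'
    rw [hfun, shL_add]
    ring

lemma c_snoc (x : List Bool) (b : Bool) (w : List Bool) :
    c w (x ++ [b]) = c w x + shR b (fun w' => c w' x.dropLast) w := by
  have h := star2 x [b] w
  have h2 : S (fun w1 => e w1 x) (fun w2 => c w2 (([b] : List Bool).drop 1)) w = e w x := by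
    rw [S_congr (g' := fun w2 => if w2 = [] then 1 else 0) (f' := fun w1 => e w1 x)
      (fun p _ => by rw [show ([b] : List Bool).drop 1 = [] from rfl, c_apply_nil])]
    exact S_unitR _ w
  have h1 : S (fun w1 => c w1 x.dropLast) (fun w2 => c w2 [b]) w =
      c w x.dropLast + shR b (fun w' => c w' x.dropLast) w := by
    rw [S_congr (f' := fun w1 => c w1 x.dropLast)
        (g' := fun w2 => (if w2 = [] then 1 else 0) + (if w2 = [b] then 1 else 0))
        (fun p _ => by rw [c_singleton])]
    rw [S_add_right, S_unitR, S_unitR_single]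
  have h3 := e_add_d x w
  rw [h1, h2] at h
  omega

lemma e_snoc (x : List Bool) (b : Bool) (w : List Bool) :
    e w (x ++ [b]) = shR b (fun w' => c w' x.dropLast) w := by
  have h1 := e_add_d (x ++ [b]) w
  rw [List.dropLast_concat, c_snoc] at h1
  omega

lemma shL_congr {n : ℕ} {f g : List Bool → ℕ} (b : Bool)
    (h : ∀ v : List Bool, v.length + 1 ≤ n → f v = g v) {w : List Bool} (hw : w.length ≤ n) :
    shL b f w = shL b g w := by
  rcases w with _ | ⟨a, w'⟩
  · rfl
  · simp only [shL]
    rw [h w' (by simpa using hw)]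

lemma shR_congr {n : ℕ} {f g : List Bool → ℕ} (b : Bool)
    (h : ∀ v : List Bool, v.length + 1 ≤ n → f v = g v) {w : List Bool} (hw : w.length ≤ n) :
    shR b f w = shR b g w := by
  rcases w with _ | ⟨a, w'⟩
  · rfl
  · simp only [shR]
    split
    · rw [h (a :: w').dropLast (by
        have hw' : w'.length + 1 ≤ n := by simpa using hw
        simp only [List.length_dropLast, List.length_cons]
        omega)]
    · rfl

lemma S_tail_eq : ∀ (v : List Bool) (h h' g g' : List Bool → ℕ),
    (∀ w1 w2, w1 ++ w2 = v → w2 ≠ [] → h w1 * g w2 = h' w1 * g' w2) →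
    S h g v + h' v * g' [] = S h' g' v + h v * g []
  | [], h, h', g, g', _ => by simp [S_nil]; ring
  | b :: v', h, h', g, g', hyp => by
    rw [S_cons, S_cons]
    have h0 : h [] * g (b :: v') = h' [] * g' (b :: v') := hyp [] (b :: v') rfl (by simp)
    have hT := S_tail_eq v' (fun w1 => h (b :: w1)) (fun w1 => h' (b :: w1)) g g'
      (fun w1 w2 hs hne => hyp (b :: w1) w2 (by rw [← hs]; rfl) hne)
    linarith

lemma S_interior_eq (w : List Bool) (f g f' g' : List Bool → ℕ)
    (hint : ∀ w1 w2, w1 ++ w2 = w → w1 ≠ [] → w2 ≠ [] → f w1 * g w2 = f' w1 * g' w2)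
    (hunit : f [] * g [] = f' [] * g' []) :
    S f g w + f' [] * g' w + f' w * g' [] = S f' g' w + f [] * g w + f w * g [] := by
  rcases w with _ | ⟨a, w'⟩
  · simp [S_nil]; linarith
  · rw [S_cons, S_cons]
    have hT := S_tail_eq w' (fun w1 => f (a :: w1)) (fun w1 => f' (a :: w1)) g g'
      (fun w1 w2 hs hne => hint (a :: w1) w2 (by rw [← hs]; rfl) (by simp) hne)
    linarith

lemma gapped_cons (a : Bool) (l : List Bool) :
    gappedSubseqs 2 (a :: l) = gappedSubseqs 2 l + (gappedSubseqs 2 (l.drop 1)).map (a :: ·) := by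
  rw [gappedSubseqs]

lemma count_map_cons (a : Bool) (s : Multiset (List Bool)) :
    ∀ w, (s.map (a :: ·)).count w = shL a (fun w' => s.count w') w
  | [] => by
    simp only [shL]
    rw [Multiset.count_eq_zero]
    simp
  | a' :: w' => by
    simp only [shL]
    by_cases h : a' = a
    · subst h
      rw [if_pos rfl]
      exact Multiset.count_map_eq_count' _ s (List.cons_injective) w'
    · rw [if_neg h, Multiset.count_eq_zero]
      simp only [Multiset.mem_map, not_exists, not_and]
      intro x _ hx
      exact h (by injection hx with h1 _; exact h1.symm)

lemma count_gapped : ∀ (x : List Bool) (w : List Bool), (gappedSubseqs 2 x).count w = c w x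
  | [], w => by
    rw [show gappedSubseqs 2 [] = {[]} from by rw [gappedSubseqs]]
    rw [Multiset.count_singleton, c_apply_nil]
  | [a], w => by
    have h := count_gapped ([] : List Bool)
    rw [gapped_cons, Multiset.count_add, h, List.drop_nil, count_map_cons, c_cons w a [],
      List.drop_nil,
      show (fun w' => (gappedSubseqs 2 []).count w') = (fun w' => c w' []) from funext h]
  | a :: b :: l, w => by
    rw [gapped_cons, Multiset.count_add, count_gapped (b :: l), count_map_cons,
      c_cons w a (b :: l), show (b :: l).drop 1 = l from rfl,
      show (fun w' => (gappedSubseqs 2 l).count w') = (fun w' => c w' l) from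
        funext (count_gapped l)]

lemma Bdeck_eq {K : ℕ} {x y : List Bool} (h : ∀ w : List Bool, w.length ≤ K → c w x = c w y) :
    Bdeck K x = Bdeck K y := by
  unfold Bdeck gDeck
  ext w
  rw [Multiset.count_filter, Multiset.count_filter]
  by_cases hw : 1 ≤ w.length ∧ w.length ≤ K
  · rw [if_pos hw, if_pos hw, count_gapped, count_gapped, h w hw.2]
  · rw [if_neg hw, if_neg hw]

/-- The inductive invariant: counts agree for all words of length ≤ K, on the
strings themselves and all four punctured variants. -/
def Pc (K : ℕ) (X Y : List Bool) : Prop :=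
  ∀ w : List Bool, w.length ≤ K →
    c w X = c w Y ∧ c w (X.drop 1) = c w (Y.drop 1) ∧
    c w X.dropLast = c w Y.dropLast ∧ c w ((X.drop 1).dropLast) = c w ((Y.drop 1).dropLast)

lemma drop_one_append {l : List Bool} (hl : l ≠ []) (m : List Bool) :
    (l ++ m).drop 1 = l.drop 1 ++ m := by
  rcases l with _ | ⟨a, l⟩
  · exact absurd rfl hl
  · rfl

/-- Generic comparison for a single concatenation. -/
lemma goal_core {K : ℕ} {u1 v1 u2 v2 : List Bool} {w : List Bool} (hw : w.length ≤ K + 1)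
    (hdu : ∀ w' : List Bool, w'.length ≤ K → c w' u1.dropLast = c w' u2.dropLast)
    (hcv : ∀ w' : List Bool, w'.length ≤ K → c w' v1 = c w' v2)
    (he : ∀ w' : List Bool, w'.length ≤ K + 1 → e w' u1 = e w' u2)
    (hc1v : ∀ w' : List Bool, w'.length ≤ K → c w' (v1.drop 1) = c w' (v2.drop 1))
    (hext : c w v2 + c w u2.dropLast = c w v1 + c w u1.dropLast) :
    c w (u1 ++ v1) = c w (u2 ++ v2) := by
  rw [star2, star2]
  have hint : ∀ w1 w2 : List Bool, w1 ++ w2 = w → w1 ≠ [] → w2 ≠ [] →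
      c w1 u1.dropLast * c w2 v1 = c w1 u2.dropLast * c w2 v2 := by
    intro w1 w2 hs h1 h2
    have hlen : w1.length + w2.length ≤ K + 1 := by
      rw [← List.length_append, hs]; exact hw
    have l1 : 1 ≤ w1.length := List.length_pos_iff.mpr h1
    have l2 : 1 ≤ w2.length := List.length_pos_iff.mpr h2
    rw [hdu w1 (by omega), hcv w2 (by omega)]
  have hD := S_interior_eq w (fun w1 => c w1 u1.dropLast) (fun w2 => c w2 v1)
    (fun w1 => c w1 u2.dropLast) (fun w2 => c w2 v2) hint
    (by simp [c_nil_left])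
  simp only [c_nil_left, one_mul, mul_one] at hD
  have hE : S (fun w1 => e w1 u1) (fun w2 => c w2 (v1.drop 1)) w =
      S (fun w1 => e w1 u2) (fun w2 => c w2 (v2.drop 1)) w := by
    apply S_congr
    intro p hp
    have hs := splits_mem hp
    have hlen : p.1.length + p.2.length ≤ K + 1 := by
      rw [← List.length_append, hs]; exact hw
    rcases eq_or_ne p.2 [] with h2 | h2
    · rw [h2, c_nil_left, c_nil_left, he p.1 (by omega)]
    · rcases eq_or_ne p.1 [] with h1 | h1
      · rw [h1, e_nil_left, e_nil_left]
        simp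
      · have l1 : 1 ≤ p.1.length := List.length_pos_iff.mpr h1
        have l2 : 1 ≤ p.2.length := List.length_pos_iff.mpr h2
        rw [he p.1 (by omega), hc1v p.2 (by omega)]
  linarith

section Step

variable {K : ℕ} {X Y : List Bool}

lemma step (hX : X ≠ []) (hY : Y ≠ []) (h : Pc K X Y) :
    Pc (K + 1) ([false] ++ X ++ [false, false] ++ Y ++ [false])
      ([false] ++ Y ++ [false, false] ++ X ++ [false]) := by
  have hc : ∀ w : List Bool, w.length ≤ K → c w X = c w Y := fun w hw => (h w hw).1
  have ht : ∀ w : List Bool, w.length ≤ K → c w (X.drop 1) = c w (Y.drop 1) :=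
    fun w hw => (h w hw).2.1
  have hd : ∀ w : List Bool, w.length ≤ K → c w X.dropLast = c w Y.dropLast :=
    fun w hw => (h w hw).2.2.1
  have htd : ∀ w : List Bool, w.length ≤ K →
      c w ((X.drop 1).dropLast) = c w ((Y.drop 1).dropLast) := fun w hw => (h w hw).2.2.2
  -- snoc variants
  have hsnoc : ∀ w : List Bool, w.length ≤ K → c w (X ++ [false]) = c w (Y ++ [false]) := by
    intro w hw
    rw [c_snoc, c_snoc, hc w hw, shR_congr false (fun v hv => hd v (by omega)) hw]
  have hsnoct : ∀ w : List Bool, w.length ≤ K →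
      c w (X.drop 1 ++ [false]) = c w (Y.drop 1 ++ [false]) := by
    intro w hw
    rw [c_snoc, c_snoc, ht w hw, shR_congr false (fun v hv => htd v (by omega)) hw]
  have h0X : ∀ w : List Bool, w.length ≤ K → c w (false :: X) = c w (false :: Y) := by
    intro w hw
    rw [c_cons, c_cons, hc w hw, shL_congr false (fun v hv => ht v (by omega)) hw]
  have h0X0 : ∀ w : List Bool, w.length ≤ K →
      c w (false :: (X ++ [false])) = c w (false :: (Y ++ [false])) := by
    intro w hw
    rw [c_cons, c_cons, drop_one_append hX, drop_one_append hY, hsnoc w hw,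
      shL_congr false (fun v hv => hsnoct v (by omega)) hw]
  have he0 : ∀ w : List Bool, w.length ≤ K + 1 → e w (X ++ [false]) = e w (Y ++ [false]) := by
    intro w hw
    rw [e_snoc, e_snoc, shR_congr false (fun v hv => hd v (by omega)) hw]
  have het0 : ∀ w : List Bool, w.length ≤ K →
      e w (X.drop 1 ++ [false]) = e w (Y.drop 1 ++ [false]) := by
    intro w hw
    rw [e_snoc, e_snoc, shR_congr false (fun v hv => htd v (by omega)) hw]
  have he00 : ∀ w : List Bool, w.length ≤ K + 1 →
      e w (false :: (X ++ [false])) = e w (false :: (Y ++ [false])) := by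
    intro w hw
    rw [e_cons _ _ (by simp : X ++ [false] ≠ []), e_cons _ _ (by simp : Y ++ [false] ≠ []),
      drop_one_append hX, drop_one_append hY, he0 w hw,
      shL_congr false (fun v hv => het0 v (by omega)) hw]
  -- extreme-term identities
  have hE1 : ∀ w : List Bool, w.length ≤ K + 1 →
      c w (false :: (X ++ [false])) + c w (false :: Y) =
      c w (false :: (Y ++ [false])) + c w (false :: X) := by
    intro w hw
    rw [c_cons (x := X ++ [false]), c_cons (x := Y ++ [false]), c_cons (x := X),
      c_cons (x := Y), drop_one_append hX, drop_one_append hY, c_snoc X, c_snoc Y]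
    have s1 : shL false (fun w' => c w' (X.drop 1)) w =
        shL false (fun w' => c w' (Y.drop 1)) w :=
      shL_congr false (fun v hv => ht v (by omega)) hw
    have s2 : shR false (fun w' => c w' X.dropLast) w =
        shR false (fun w' => c w' Y.dropLast) w :=
      shR_congr false (fun v hv => hd v (by omega)) hw
    have s3 : shL false (fun w' => c w' (X.drop 1 ++ [false])) w =
        shL false (fun w' => c w' (Y.drop 1 ++ [false])) w :=
      shL_congr false (fun v hv => hsnoct v (by omega)) hw
    linarith
  have hE2 : ∀ w : List Bool, w.length ≤ K + 1 →
      c w (false :: (X ++ [false])) + c w Y = c w (false :: (Y ++ [false])) + c w X := by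
    intro w hw
    rw [c_cons (x := X ++ [false]), c_cons (x := Y ++ [false]),
      drop_one_append hX, drop_one_append hY, c_snoc X, c_snoc Y]
    have s2 : shR false (fun w' => c w' X.dropLast) w =
        shR false (fun w' => c w' Y.dropLast) w :=
      shR_congr false (fun v hv => hd v (by omega)) hw
    have s3 : shL false (fun w' => c w' (X.drop 1 ++ [false])) w =
        shL false (fun w' => c w' (Y.drop 1 ++ [false])) w :=
      shL_congr false (fun v hv => hsnoct v (by omega)) hw
    linarith
  have hE3 : ∀ w : List Bool, w.length ≤ K + 1 →
      c w (false :: X) + c w Y = c w (false :: Y) + c w X := by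
    intro w hw
    rw [c_cons (x := X), c_cons (x := Y)]
    have s1 : shL false (fun w' => c w' (X.drop 1)) w =
        shL false (fun w' => c w' (Y.drop 1)) w :=
      shL_congr false (fun v hv => ht v (by omega)) hw
    linarith
  -- shape identities
  have dl1 : (false :: (X ++ [false])).dropLast = false :: X := by
    rw [show false :: (X ++ [false]) = (false :: X) ++ [false] from rfl, List.dropLast_concat]
  have dl1Y : (false :: (Y ++ [false])).dropLast = false :: Y := by
    rw [show false :: (Y ++ [false]) = (false :: Y) ++ [false] from rfl, List.dropLast_concat]
  have dl2 : (X ++ [false]).dropLast = X := List.dropLast_concat ..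
  have dl2Y : (Y ++ [false]).dropLast = Y := List.dropLast_concat ..
  intro w hw
  refine ⟨?_, ?_, ?_, ?_⟩
  · -- the strings themselves
    rw [show [false] ++ X ++ [false, false] ++ Y ++ [false] =
        (false :: (X ++ [false])) ++ (false :: (Y ++ [false])) by simp,
      show [false] ++ Y ++ [false, false] ++ X ++ [false] =
        (false :: (Y ++ [false])) ++ (false :: (X ++ [false])) by simp]
    refine goal_core hw ?_ ?_ ?_ ?_ ?_
    · intro w' hw'; rw [dl1, dl1Y]; exact h0X w' hw'
    · intro w' hw'; exact (h0X0 w' hw').symm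
    · exact he00
    · intro w' hw'
      rw [show (false :: (Y ++ [false])).drop 1 = Y ++ [false] from rfl,
        show (false :: (X ++ [false])).drop 1 = X ++ [false] from rfl]
      exact (hsnoc w' hw').symm
    · rw [dl1, dl1Y]; have := hE1 w hw; linarith
  · -- drop 1
    rw [show ([false] ++ X ++ [false, false] ++ Y ++ [false]).drop 1 =
        (X ++ [false]) ++ (false :: (Y ++ [false])) by simp,
      show ([false] ++ Y ++ [false, false] ++ X ++ [false]).drop 1 =
        (Y ++ [false]) ++ (false :: (X ++ [false])) by simp]
    refine goal_core hw ?_ ?_ ?_ ?_ ?_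
    · intro w' hw'; rw [dl2, dl2Y]; exact hc w' hw'
    · intro w' hw'; exact (h0X0 w' hw').symm
    · exact he0
    · intro w' hw'
      rw [show (false :: (Y ++ [false])).drop 1 = Y ++ [false] from rfl,
        show (false :: (X ++ [false])).drop 1 = X ++ [false] from rfl]
      exact (hsnoc w' hw').symm
    · rw [dl2, dl2Y]; have := hE2 w hw; linarith
  · -- dropLast
    rw [show ([false] ++ X ++ [false, false] ++ Y ++ [false]).dropLast =
        (false :: (X ++ [false])) ++ (false :: Y) by
        rw [show [false] ++ X ++ [false, false] ++ Y ++ [false] =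
          ((false :: (X ++ [false])) ++ (false :: Y)) ++ [false] by simp, List.dropLast_concat],
      show ([false] ++ Y ++ [false, false] ++ X ++ [false]).dropLast =
        (false :: (Y ++ [false])) ++ (false :: X) by
        rw [show [false] ++ Y ++ [false, false] ++ X ++ [false] =
          ((false :: (Y ++ [false])) ++ (false :: X)) ++ [false] by simp, List.dropLast_concat]]
    refine goal_core hw ?_ ?_ ?_ ?_ ?_
    · intro w' hw'; rw [dl1, dl1Y]; exact h0X w' hw'
    · intro w' hw'; exact (h0X w' hw').symm
    · exact he00
    · intro w' hw'
      rw [show (false :: Y).drop 1 = Y from rfl, show (false :: X).drop 1 = X from rfl]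
      exact (hc w' hw').symm
    · rw [dl1, dl1Y]; linarith
  · -- drop 1 then dropLast
    rw [show (([false] ++ X ++ [false, false] ++ Y ++ [false]).drop 1).dropLast =
        (X ++ [false]) ++ (false :: Y) by
        rw [show ([false] ++ X ++ [false, false] ++ Y ++ [false]).drop 1 =
          ((X ++ [false]) ++ (false :: Y)) ++ [false] by simp, List.dropLast_concat],
      show (([false] ++ Y ++ [false, false] ++ X ++ [false]).drop 1).dropLast =
        (Y ++ [false]) ++ (false :: X) by
        rw [show ([false] ++ Y ++ [false, false] ++ X ++ [false]).drop 1 =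
          ((Y ++ [false]) ++ (false :: X)) ++ [false] by simp, List.dropLast_concat]]
    refine goal_core hw ?_ ?_ ?_ ?_ ?_
    · intro w' hw'; rw [dl2, dl2Y]; exact hc w' hw'
    · intro w' hw'; exact (h0X w' hw').symm
    · exact he0
    · intro w' hw'
      rw [show (false :: Y).drop 1 = Y from rfl, show (false :: X).drop 1 = X from rfl]
      exact (hc w' hw').symm
    · rw [dl2, dl2Y]; have := hE3 w hw; linarith

end Step

lemma px_ne_nil : ∀ j, px j ≠ [] := by
  intro j; cases j <;> simp [px]

lemma py_ne_nil : ∀ j, py j ≠ [] := by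
  intro j; cases j <;> simp [py]

lemma main : ∀ j, Pc (j + 1) (px j) (py j)
  | 0 => by
    intro w hw
    rcases w with _ | ⟨a, _ | ⟨b, w⟩⟩
    · simp only [px, py]; decide
    · cases a <;> (simp only [px, py]; decide)
    · simp only [List.length_cons] at hw; omega
  | j + 1 => by
    have hstep := step (px_ne_nil j) (py_ne_nil j) (main j)
    simpa only [px, py] using hstep

lemma px_py_length : ∀ j, (px j).length = 4 * (2 ^ (j + 1) - 1) ∧
    (py j).length = 4 * (2 ^ (j + 1) - 1)
  | 0 => by simp [px, py]
  | j + 1 => by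
    obtain ⟨h1, h2⟩ := px_py_length j
    have hp : 1 ≤ 2 ^ (j + 1) := Nat.one_le_two_pow
    simp only [px, py, List.length_append, h1, h2, List.length_cons, List.length_nil, pow_succ]
    omega

lemma px_ne_py : ∀ j, px j ≠ py j
  | 0 => by simp [px, py]
  | j + 1 => by
    intro hcontr
    simp only [px, py] at hcontr
    apply px_ne_py j
    have hl : (px j).length = (py j).length := by
      rw [(px_py_length j).1, (px_py_length j).2]
    have h3 : (false :: px j) ++ ([false, false] ++ py j ++ [false]) =
        (false :: py j) ++ ([false, false] ++ px j ++ [false]) := by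
      simpa using hcontr
    have h4 := (List.append_inj h3 (by simp [hl])).1
    injection h4

end Stmt4Aux


/-- The padded Morse-Thue strings `x^(k) = px (k-1)` and
`y^(k) = py (k-1)` are distinct, have length `4(2^k - 1)`, and share the same
gapped `k`-deck, also after puncturing on the left, right and both sides;
in particular `G*(k) ≤ 4(2^k - 1)`. -/
theorem stmt4 (k : ℕ) (hk : 1 ≤ k) :
    px (k - 1) ≠ py (k - 1) ∧
    (px (k - 1)).length = 4 * (2 ^ k - 1) ∧
    (py (k - 1)).length = 4 * (2 ^ k - 1) ∧
    Bdeck k (px (k - 1)) = Bdeck k (py (k - 1)) ∧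
    BLdeck k (px (k - 1)) = BLdeck k (py (k - 1)) ∧
    BRdeck k (px (k - 1)) = BRdeck k (py (k - 1)) ∧
    BLRdeck k (px (k - 1)) = BLRdeck k (py (k - 1)) ∧
    Gstar k ≤ 4 * (2 ^ k - 1) := by
  obtain ⟨j, rfl⟩ : ∃ j, k = j + 1 := ⟨k - 1, by omega⟩
  simp only [Nat.add_sub_cancel]
  have hP := Stmt4Aux.main j
  have hlen := Stmt4Aux.px_py_length j
  have hne := Stmt4Aux.px_ne_py j
  have hB : Bdeck (j + 1) (px j) = Bdeck (j + 1) (py j) :=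
    Stmt4Aux.Bdeck_eq (fun w hw => (hP w hw).1)
  have hBL : BLdeck (j + 1) (px j) = BLdeck (j + 1) (py j) := by
    unfold BLdeck
    refine Stmt4Aux.Bdeck_eq (fun w hw => ?_)
    have := (hP w hw).2.1
    rwa [List.drop_one, List.drop_one] at this
  have hBR : BRdeck (j + 1) (px j) = BRdeck (j + 1) (py j) := by
    unfold BRdeck
    exact Stmt4Aux.Bdeck_eq (fun w hw => (hP w hw).2.2.1)
  have hBLR : BLRdeck (j + 1) (px j) = BLRdeck (j + 1) (py j) := by
    unfold BLRdeck
    refine Stmt4Aux.Bdeck_eq (fun w hw => ?_)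
    have := (hP w hw).2.2.2
    rwa [List.drop_one, List.drop_one] at this
  have hpos : 0 < 4 * (2 ^ (j + 1) - 1) := by
    have : 2 ≤ 2 ^ (j + 1) := by
      calc 2 = 2 ^ 1 := by norm_num
      _ ≤ 2 ^ (j + 1) := Nat.pow_le_pow_right (by norm_num) (by omega)
    omega
  refine ⟨hne, hlen.1, hlen.2, hB, hBL, hBR, hBLR, ?_⟩
  exact Nat.sInf_le ⟨hpos, px j, py j, hlen.1, hlen.2, hne, hB, hBL, hBR, hBLR⟩
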